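/- (Correctness of the friends-of-friends algorithm.) Let P : Fin N → ℝ³ be a finite set of points, b > 0 a linking length, and let G be the linking graph on Fin N in which i and j are adjacent iff i ≠ j and dist (P i) (P j) ≤ b. Let L be any list of pairs of elements of Fin N such that every pair (i, j) with i ≠ j and dist (P i) (P j) ≤ b occurs in L (in either order), and such that every pair occurring in L is adjacent in G. Let H_final be obtained by starting from the identity function and folding the merge operation over L. Then for all i j : Fin N, root H_final i = root H_final j if and only if i and j are joined by a path in G (i.e., i and j lie in the same friends-of-friends feature). In particular the features identified by the algorithm are exactly the connected components of G. -/

import Mathlib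

/-!
The parent function stays a forest throughout: every periodic point is a fixed point, so the
orbit of any `i` reaches its root within `N` steps. Redirecting a root `a` to another root `b`
changes the root map by post-composition with `update id a b`, which fuses exactly the classes
of `a` and `b`. Hence after the fold, "same root" is the equivalence relation generated by the
visited pairs. Since those pairs are the edges of the linking graph up to orientation, that
equivalence relation is reachability.
-/

/-- The root of `i` in the forest `H`: the fixed point of `H` reached by
iterating `H` starting from `i` (for a forest parent function on `Fin N`,
`N` iterations always suffice to reach the fixed point). -/
def root {N : ℕ} (H : Fin N → Fin N) (i : Fin N) : Fin N :=
  H^[N] i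

/-- The merge operation for a visited pair `(i, j)`: set the parent of
`root H i` to `root H j` when the two roots differ, do nothing otherwise. -/
def mergeStep {N : ℕ} (H : Fin N → Fin N) (p : Fin N × Fin N) :
    Fin N → Fin N :=
  if root H p.1 = root H p.2 then H
  else Function.update H (root H p.1) (root H p.2)

/-- The friends-of-friends union-find state obtained by starting from the
identity parent function and folding the merge operation over the list of
visited pairs `L`. -/
def runFOF {N : ℕ} (L : List (Fin N × Fin N)) : Fin N → Fin N :=
  L.foldl mergeStep id

/-- The linking graph of points `P` with linking length `b`: `i` and `j` are
adjacent iff `i ≠ j` and `dist (P i) (P j) ≤ b`. -/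
def linkingGraph {N : ℕ} (P : Fin N → EuclideanSpace ℝ (Fin 3)) (b : ℝ) :
    SimpleGraph (Fin N) where
  Adj i j := i ≠ j ∧ dist (P i) (P j) ≤ b
  symm := by
    constructor
    intro i j ⟨hne, hd⟩
    exact ⟨hne.symm, by rwa [dist_comm]⟩
  loopless := by constructor; intro i ⟨hne, _⟩; exact hne rfl

open Function Relation

/-- On a finite type this is equivalent to the forest condition: some rank `r` satisfies
`r (f i) < r i` whenever `f i ≠ i`. -/
def IsForest {α : Type*} (f : α → α) : Prop :=
  periodicPts f ⊆ fixedPoints f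

theorem isForest_id {α : Type*} : IsForest (id : α → α) := fun _ _ => rfl

section Iterate

variable {α : Type*} {f : α → α} {a b c x : α}

theorem iterate_eq_of_le {m n : ℕ} (hc : f c = c) (h : f^[m] x = c) (hmn : m ≤ n) :
    f^[n] x = c := by
  obtain ⟨k, rfl⟩ := Nat.exists_eq_add_of_le hmn
  rw [add_comm, iterate_add_apply, h, iterate_fixed hc]

variable [DecidableEq α]

theorem iterate_update_of_iterate_ne (ha : f a = a) {n : ℕ} (h : f^[n] x ≠ a) :
    (update f a b)^[n] x = f^[n] x := by
  induction n generalizing x with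
  | zero => rfl
  | succ n ih =>
    have hx : x ≠ a := by
      rintro rfl
      exact h (iterate_fixed ha _)
    rw [iterate_succ_apply, iterate_succ_apply, update_of_ne hx, ih h]

theorem iterate_succ_update_of_iterate_eq (hb : f b = b) (hab : a ≠ b) {n : ℕ}
    (h : f^[n] x = a) : (update f a b)^[n + 1] x = b := by
  induction n generalizing x with
  | zero => simp [← h]
  | succ n ih =>
    by_cases hx : x = a
    · subst hx
      rw [iterate_succ_apply, update_self]
      exact iterate_fixed (by rw [update_of_ne hab.symm, hb]) _
    · rw [iterate_succ_apply, update_of_ne hx]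
      exact ih h

end Iterate

namespace IsForest

variable {α : Type*} {f : α → α}

theorem exists_isFixedPt_iterate [Fintype α] (hf : IsForest f) (x : α) :
    ∃ m < Fintype.card α, IsFixedPt f (f^[m] x) := by
  obtain ⟨s, t, hst, heq⟩ := Fintype.exists_ne_map_eq_of_card_lt
    (fun m : Fin (Fintype.card α + 1) => f^[m] x) (by simp)
  wlog hlt : s < t generalizing s t
  · exact this t s hst.symm heq.symm ((not_lt.1 hlt).lt_of_ne hst.symm)
  have hper : IsPeriodicPt f (t - s) (f^[s] x) := by
    rw [IsPeriodicPt, IsFixedPt, ← iterate_add_apply, Nat.sub_add_cancel hlt.le, heq]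
  exact ⟨s, by omega, hf (mk_mem_periodicPts (by omega) hper)⟩

variable [DecidableEq α] {a b : α}

theorem update (hf : IsForest f) (ha : f a = a) (hb : f b = b) (hab : a ≠ b) :
    IsForest (Function.update f a b) := by
  intro x hx
  obtain ⟨k, hk, hper⟩ := mem_periodicPts.1 hx
  have hb' : Function.update f a b b = b := by rw [update_of_ne hab.symm, hb]
  by_cases hka : f^[k] x = a
  · have hxb : x = b := by
      rw [← (hper.mul_const 2).eq]
      exact iterate_eq_of_le hb' (iterate_succ_update_of_iterate_eq hb hab hka) (by omega)
    rw [hxb]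
    exact hb'
  · have hfk : f^[k] x = x := by
      rw [← iterate_update_of_iterate_ne ha hka]
      exact hper.eq
    have hxa : x ≠ a := hfk ▸ hka
    change Function.update f a b x = x
    rw [update_of_ne hxa]
    exact hf (mk_mem_periodicPts hk hfk)

end IsForest

section Root

variable {N : ℕ} {H : Fin N → Fin N}

theorem root_id : root (id : Fin N → Fin N) = id := by
  funext i
  simp [root]

theorem exists_root_eq_iterate (hH : IsForest H) (i : Fin N) :
    ∃ m < N, IsFixedPt H (H^[m] i) ∧ root H i = H^[m] i := by
  obtain ⟨m, hm, hfix⟩ := hH.exists_isFixedPt_iterate i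
  rw [Fintype.card_fin] at hm
  exact ⟨m, hm, hfix, iterate_eq_of_le hfix rfl hm.le⟩

theorem isFixedPt_root (hH : IsForest H) (i : Fin N) : IsFixedPt H (root H i) := by
  obtain ⟨m, -, hfix, hroot⟩ := exists_root_eq_iterate hH i
  rwa [hroot]

theorem root_update (hH : IsForest H) {a b : Fin N} (ha : H a = a) (hb : H b = b)
    (hab : a ≠ b) : root (update H a b) = update id a b ∘ root H := by
  funext i
  simp only [comp_apply, update_apply, id_eq]
  split_ifs with hi
  · obtain ⟨m, hm, -, hroot⟩ := exists_root_eq_iterate hH i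
    exact iterate_eq_of_le (by rw [update_of_ne hab.symm, hb])
      (iterate_succ_update_of_iterate_eq hb hab (hroot ▸ hi)) hm
  · exact iterate_update_of_iterate_ne ha hi

theorem IsForest.mergeStep (hH : IsForest H) (p : Fin N × Fin N) :
    IsForest (mergeStep H p) := by
  unfold _root_.mergeStep
  split_ifs with h
  · exact hH
  · exact hH.update (isFixedPt_root hH _) (isFixedPt_root hH _) h

theorem root_mergeStep (hH : IsForest H) (p : Fin N × Fin N) :
    root (mergeStep H p) = update id (root H p.1) (root H p.2) ∘ root H := by
  unfold _root_.mergeStep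
  split_ifs with h
  · rw [h, show update id (root H p.2) (root H p.2) = id from update_eq_self _ _, id_comp]
  · exact root_update hH (isFixedPt_root hH _) (isFixedPt_root hH _) h

end Root

theorem Setoid.ker_update_comp {α β : Type*} [DecidableEq β] (g : α → β) (x y : α) :
    Setoid.ker (update id (g x) (g y) ∘ g) =
      Setoid.ker g ⊔ EqvGen.setoid (fun u v => (u, v) = (x, y)) := by
  set r := Setoid.ker g ⊔ EqvGen.setoid (fun u v => (u, v) = (x, y))
  apply le_antisymm
  · have hxy : r x y := Setoid.le_def.1 le_sup_right (EqvGen.rel _ _ rfl)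
    have hker : ∀ {u v}, g u = g v → r u v := fun h => Setoid.le_def.1 le_sup_left h
    intro u v huv
    simp only [Setoid.ker_def, comp_apply, update_apply, id_eq] at huv
    split_ifs at huv with hu hv hv
    · exact hker (hu.trans hv.symm)
    · exact r.trans' (hker hu) (r.trans' hxy (hker huv))
    · exact r.trans' (hker huv) (r.trans' (r.symm' hxy) (hker hv.symm))
    · exact hker huv
  · refine sup_le (fun u v h => congrArg (update id (g x) (g y)) h) (Setoid.eqvGen_le ?_)
    rintro u v ⟨⟩
    simp [Setoid.ker_def, update_apply]

theorem ker_root_foldl_mergeStep {N : ℕ} {H : Fin N → Fin N} (hH : IsForest H)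
    (L : List (Fin N × Fin N)) :
    Setoid.ker (root (L.foldl mergeStep H)) =
      Setoid.ker (root H) ⊔ EqvGen.setoid (fun u v => (u, v) ∈ L) := by
  induction L generalizing H with
  | nil =>
    have hrel : (fun u v : Fin N => (u, v) ∈ ([] : List (Fin N × Fin N))) = ⊥ := by
      ext; simp
    rw [List.foldl_nil, hrel, Setoid.gi.gc.l_bot, sup_bot_eq]
  | cons p L ih =>
    have hrel : (fun u v : Fin N => (u, v) ∈ p :: L) =
        (fun u v => (u, v) = (p.1, p.2)) ⊔ (fun u v => (u, v) ∈ L) := by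
      ext; simp
    rw [List.foldl_cons, ih (hH.mergeStep p), root_mergeStep hH, Setoid.ker_update_comp,
      sup_assoc, ← Setoid.gi.gc.l_sup, hrel]

theorem SimpleGraph.reachable_iff_eqvGen {V : Type*} {G : SimpleGraph V} {r : V → V → Prop}
    (h : ∀ u v, G.Adj u v ↔ r u v ∨ r v u) (u v : V) :
    G.Reachable u v ↔ EqvGen r u v := by
  have hadj : G.Adj = SymmGen r := by
    ext u v
    exact h u v
  rw [reachable_iff_reflTransGen, hadj, EqvGen.reflTransGen_symmGen]

theorem fof_correct_general {N : ℕ} (P : Fin N → EuclideanSpace ℝ (Fin 3)) (b : ℝ)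
    (L : List (Fin N × Fin N))
    (hcover : ∀ i j : Fin N, i ≠ j → dist (P i) (P j) ≤ b →
      ((i, j) ∈ L ∨ (j, i) ∈ L))
    (hadj : ∀ p ∈ L, (linkingGraph P b).Adj p.1 p.2) :
    ∀ i j : Fin N,
      root (runFOF L) i = root (runFOF L) j ↔
        (linkingGraph P b).Reachable i j := by
  have hker : Setoid.ker (root (runFOF L)) = EqvGen.setoid (fun u v => (u, v) ∈ L) := by
    rw [runFOF, ker_root_foldl_mergeStep isForest_id, root_id,
      Setoid.ker_eq_bot_iff.2 injective_id, bot_sup_eq]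
  have hlink : ∀ u v, (linkingGraph P b).Adj u v ↔ (u, v) ∈ L ∨ (v, u) ∈ L := fun u v =>
    ⟨fun h => hcover u v h.1 h.2, fun h => h.elim (hadj _) (fun h => (hadj _ h).symm)⟩
  intro i j
  rw [SimpleGraph.reachable_iff_eqvGen hlink, ← Setoid.ker_def, hker]
  rfl

/-- Correctness of the friends-of-friends algorithm: if the enumerated list
of pairs `L` contains (in some order) every pair of distinct points within
linking length `b` of each other, and contains only such pairs, then the final
union-find state assigns equal roots to `i` and `j` exactly when `i` and `j`
are joined by a path in the linking graph, i.e. the identified features are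
exactly the connected components of the linking graph. -/
theorem fof_correct {N : ℕ} (P : Fin N → EuclideanSpace ℝ (Fin 3)) (b : ℝ)
    (hb : 0 < b) (L : List (Fin N × Fin N))
    (hcover : ∀ i j : Fin N, i ≠ j → dist (P i) (P j) ≤ b →
      ((i, j) ∈ L ∨ (j, i) ∈ L))
    (hadj : ∀ p ∈ L, (linkingGraph P b).Adj p.1 p.2) :
    ∀ i j : Fin N,
      root (runFOF L) i = root (runFOF L) j ↔
        (linkingGraph P b).Reachable i j :=
  fof_correct_general P b L hcover hadj
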